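/- arXiv:2301.05656 — 2 statements merged into one kernel-verified Lean document; each statement's English description precedes it below -/
import Mathlib

section
/- Let (k_n) be a sequence of natural numbers with k_n = o(n^{2/3}) as n → ∞. Then C(2n, n + k_n) ∼ C(2n, n) · exp(−k_n²/n) as n → ∞, i.e. the ratio C(2n, n + k_n) / (C(2n, n)·exp(−k_n²/n)) tends to 1. -/
/-!
Writing `C(2n, n+k) / C(2n, n) = ∏_{j<k} (n-j)/(n+j+1)`, each factor has logarithm
`-(2j+1)/n + O(k²/n²)` as long as `2k ≤ n`, and `∑_{j<k} (2j+1) = k²`. Hence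
`log (C(2n, n+k) / C(2n, n)) = -k²/n + O(k³/n²)`, and `k³/n² = (k/n^(2/3))³ → 0`.
-/

open Filter Finset Real Topology

lemma cast_choose_two_mul_add_eq_prod {n k : ℕ} (hk : k ≤ n) :
    ((2 * n).choose (n + k) : ℝ) =
      (2 * n).choose n * ∏ j ∈ range k, ((n : ℝ) - j) / (n + j + 1) := by
  induction k with
  | zero => simp
  | succ k ih =>
    have hstep : ((2 * n).choose (n + k + 1) : ℝ) * (n + k + 1) =
        (2 * n).choose (n + k) * (n - k) := by
      have h := Nat.choose_succ_right_eq (2 * n) (n + k)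
      rw [show 2 * n - (n + k) = n - k by omega] at h
      rw [← Nat.cast_sub (by omega : k ≤ n)]
      exact_mod_cast h
    rw [prod_range_succ, ← mul_assoc, ← ih (by omega), ← add_assoc, mul_div_assoc', eq_div_iff
      (by positivity)]
    exact_mod_cast hstep

lemma sum_range_two_mul_add_one (k : ℕ) : ∑ j ∈ range k, (2 * (j : ℝ) + 1) = (k : ℝ) ^ 2 := by
  induction k with
  | zero => simp
  | succ k ih => rw [sum_range_succ, ih]; push_cast; ring

lemma abs_log_div_add_le {n j k : ℝ} (hj : 0 ≤ j) (hjk : j + 1 ≤ k) (hkn : 2 * k ≤ n) :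
    |log ((n - j) / (n + j + 1)) + (2 * j + 1) / n| ≤ 4 * k ^ 2 / n ^ 2 := by
  have hn : 0 < n := by linarith
  have hnj : 0 < n - j := by linarith
  have hx : 0 < (n - j) / (n + j + 1) := by positivity
  have hupper : log ((n - j) / (n + j + 1)) ≤ -((2 * j + 1) / (n + j + 1)) := by
    have h := log_le_sub_one_of_pos hx
    rwa [show (n - j) / (n + j + 1) - 1 = -((2 * j + 1) / (n + j + 1)) by field_simp; ring] at h
  have hlower : -((2 * j + 1) / (n - j)) ≤ log ((n - j) / (n + j + 1)) := by
    have h := one_sub_inv_le_log_of_pos hx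
    rwa [show 1 - ((n - j) / (n + j + 1))⁻¹ = -((2 * j + 1) / (n - j)) by field_simp; ring] at h
  -- both one-sided errors are at most `(2j+1)(j+1)/(n (n-j)) ≤ 2k² · 2/n²`
  have hsq : (2 * j + 1) * (j + 1) ≤ 2 * k ^ 2 := by nlinarith
  rw [abs_le]
  constructor
  · have key : (2 * j + 1) / (n - j) - (2 * j + 1) / n ≤ 4 * k ^ 2 / n ^ 2 := by
      rw [div_sub_div _ _ hnj.ne' hn.ne', div_le_div_iff₀ (by positivity) (by positivity)]
      nlinarith [mul_le_mul_of_nonneg_right hsq (sq_nonneg n),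
        mul_le_mul_of_nonneg_left (by linarith : n ≤ 2 * (n - j))
          (by positivity : (0 : ℝ) ≤ 2 * k ^ 2 * n)]
    linarith
  · have key : (2 * j + 1) / n - (2 * j + 1) / (n + j + 1) ≤ 4 * k ^ 2 / n ^ 2 := by
      rw [div_sub_div _ _ hn.ne' (by positivity), div_le_div_iff₀ (by positivity) (by positivity)]
      nlinarith [mul_le_mul_of_nonneg_right hsq (sq_nonneg n),
        mul_nonneg (mul_nonneg (sq_nonneg k) hn.le) (by linarith : (0 : ℝ) ≤ j + 1),
        mul_nonneg (sq_nonneg k) (sq_nonneg n)]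
    linarith

lemma abs_log_prod_add_sq_div_le {n k : ℕ} (hkn : 2 * k ≤ n) :
    |log (∏ j ∈ range k, ((n : ℝ) - j) / (n + j + 1)) + (k : ℝ) ^ 2 / n| ≤
      4 * (k : ℝ) ^ 3 / (n : ℝ) ^ 2 := by
  have hfactor : ∀ j ∈ range k, ((n : ℝ) - j) / (n + j + 1) ≠ 0 := fun j hj => by
    have : (j : ℝ) < n := by have := mem_range.mp hj; exact_mod_cast (by omega : j < n)
    exact div_ne_zero (by linarith) (by positivity)
  rw [log_prod hfactor, ← sum_range_two_mul_add_one, sum_div, ← sum_add_distrib]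
  calc |∑ j ∈ range k, (log (((n : ℝ) - j) / (n + j + 1)) + (2 * j + 1) / n)|
      ≤ ∑ j ∈ range k, |log (((n : ℝ) - j) / (n + j + 1)) + (2 * j + 1) / n| :=
        abs_sum_le_sum_abs _ _
    _ ≤ (range k).card • (4 * (k : ℝ) ^ 2 / (n : ℝ) ^ 2) := by
        refine sum_le_card_nsmul _ _ _ fun j hj => abs_log_div_add_le (Nat.cast_nonneg j) ?_ ?_
        · exact_mod_cast mem_range.mp hj
        · exact_mod_cast hkn
    _ = 4 * (k : ℝ) ^ 3 / (n : ℝ) ^ 2 := by rw [card_range, nsmul_eq_mul]; ring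

lemma cast_choose_div_eq_exp {n k : ℕ} (hk : k ≤ n) :
    ((2 * n).choose (n + k) : ℝ) / ((2 * n).choose n * exp (-(k : ℝ) ^ 2 / n)) =
      exp (log (∏ j ∈ range k, ((n : ℝ) - j) / (n + j + 1)) + (k : ℝ) ^ 2 / n) := by
  have hprod : 0 < ∏ j ∈ range k, ((n : ℝ) - j) / (n + j + 1) := prod_pos fun j hj => by
    have : (j : ℝ) < n := by have := mem_range.mp hj; exact_mod_cast (by omega : j < n)
    exact div_pos (by linarith) (by positivity)
  have hcentral : ((2 * n).choose n : ℝ) ≠ 0 := by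
    exact_mod_cast (Nat.choose_pos (by omega : n ≤ 2 * n)).ne'
  rw [cast_choose_two_mul_add_eq_prod hk, exp_add, exp_log hprod, neg_div, exp_neg]
  field_simp

lemma tendsto_cube_div_sq_of_tendsto_div_rpow {k : ℕ → ℕ}
    (hk : Tendsto (fun n : ℕ => (k n : ℝ) / (n : ℝ) ^ ((2 : ℝ) / 3)) atTop (𝓝 0)) :
    Tendsto (fun n : ℕ => (k n : ℝ) ^ 3 / (n : ℝ) ^ 2) atTop (𝓝 0) := by
  have hpow : Tendsto (fun n : ℕ => ((k n : ℝ) / (n : ℝ) ^ ((2 : ℝ) / 3)) ^ 3) atTop (𝓝 0) := by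
    simpa using hk.pow 3
  refine hpow.congr fun n => ?_
  rw [div_pow, ← rpow_natCast ((n : ℝ) ^ ((2 : ℝ) / 3)), ← rpow_mul (Nat.cast_nonneg n)]
  norm_num

lemma eventually_two_mul_le_of_tendsto_cube_div_sq {k : ℕ → ℕ}
    (hk : Tendsto (fun n : ℕ => (k n : ℝ) ^ 3 / (n : ℝ) ^ 2) atTop (𝓝 0)) :
    ∀ᶠ n in atTop, 2 * k n ≤ n := by
  filter_upwards [hk.eventually (gt_mem_nhds (by norm_num : (0 : ℝ) < 1 / 8)),
    eventually_ge_atTop 1] with n hsmall hn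
  have hn' : (1 : ℝ) ≤ n := by exact_mod_cast hn
  rw [div_lt_iff₀ (by positivity)] at hsmall
  have hcube : (2 * (k n : ℝ)) ^ 3 < (n : ℝ) ^ 3 := by
    nlinarith [pow_le_pow_right₀ hn' (by norm_num : 2 ≤ 3)]
  exact_mod_cast (lt_of_pow_lt_pow_left₀ 3 (Nat.cast_nonneg n) hcube).le

/-- If `(k_n)` is a sequence of natural numbers with `k_n = o(n^(2/3))`, then
`C(2n, n + k_n) ∼ C(2n, n) · exp(-k_n²/n)` as `n → ∞`. -/
theorem statement10 (k : ℕ → ℕ)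
    (hk : Tendsto (fun n : ℕ => (k n : ℝ) / (n : ℝ) ^ ((2 : ℝ) / 3)) atTop (nhds 0)) :
    Tendsto (fun n : ℕ =>
        (((2 * n).choose (n + k n) : ℝ)) /
          (((2 * n).choose n : ℝ) * Real.exp (-(k n : ℝ) ^ 2 / (n : ℝ))))
      atTop (nhds 1) := by
  have hcube := tendsto_cube_div_sq_of_tendsto_div_rpow hk
  have hsmall := eventually_two_mul_le_of_tendsto_cube_div_sq hcube
  have herror : Tendsto (fun n : ℕ =>
      log (∏ j ∈ range (k n), ((n : ℝ) - j) / (n + j + 1)) + (k n : ℝ) ^ 2 / n) atTop (𝓝 0) := by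
    refine squeeze_zero_norm' ?_ (by simpa using hcube.const_mul 4)
    filter_upwards [hsmall] with n hn
    simpa only [Real.norm_eq_abs, mul_div_assoc] using abs_log_prod_add_sq_div_le hn
  have hexp := (continuous_exp.tendsto 0).comp herror
  rw [exp_zero] at hexp
  refine hexp.congr' ?_
  filter_upwards [hsmall] with n hn
  exact (cast_choose_div_eq_exp (by omega)).symm
end

section
/- Fix θ with 0 < θ ≤ π/4 and let F_θ(x) denote the number of pairs (a, b) of positive integers of opposite parity satisfying a² + b² < x² and b ≤ a·tan(θ). Then F_θ(x) ∼ θ·x²/4 as x → ∞, i.e. F_θ(x)/(θ·x²/4) → 1. -/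
/-!
Split the pairs of positive integers into all lattice points and those with `a + b` even.
The latter form the checkerboard lattice spanned by `(1, 1)` and `(1, -1)`, of covolume `2`,
so the opposite-parity points are the points of `ℤ²` (covolume `1`) minus those of the
checkerboard lattice. The number of points of a lattice `L` in the dilate by `x` of the unit
sector `{0 < b ≤ a tan θ, a² + b² ≤ 1}` is asymptotic to `area / covol L · x²`
(`ZLattice.covolume.tendsto_card_le_div`), and the sector has area `θ / 2` by polar coordinates;
hence `F_θ(x) ∼ (θ / 2 - θ / 4) x²`.
-/

open Filter Real MeasureTheory Set Submodule Topology Bornology Module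

namespace OppositeParityCount

section LatticeCount

variable {ι : Type*} [Fintype ι] (L : Submodule ℤ (ι → ℝ)) [DiscreteTopology L]

theorem finite_inter_of_isBounded {s : Set (ι → ℝ)} (hs : IsBounded s) :
    (s ∩ L).Finite :=
  Metric.finite_isBounded_inter_isClosed DiscreteTopology.isDiscrete hs
    (by rw [← coe_toAddSubgroup]; exact AddSubgroup.isClosed_of_discrete)

variable [Nonempty ι] {X : Set (ι → ℝ)} {F : (ι → ℝ) → ℝ}

theorem isBounded_sublevel (hX : ∀ ⦃x⦄ ⦃r : ℝ⦄, x ∈ X → 0 < r → r • x ∈ X)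
    (h₁ : ∀ x ⦃r : ℝ⦄, 0 ≤ r → F (r • x) = r ^ Fintype.card ι * F x)
    (h₂ : IsBounded {x ∈ X | F x ≤ 1}) {c : ℝ} (hc : 0 < c) :
    IsBounded {x ∈ X | F x ≤ c} := by
  set r := c ^ ((Fintype.card ι : ℝ)⁻¹)
  have hr : 0 < r := rpow_pos_of_pos hc _
  have hrc : r ^ Fintype.card ι = c := rpow_inv_natCast_pow hc.le Fintype.card_ne_zero
  refine (h₂.smul₀ r).subset fun x ⟨hxX, hxF⟩ ↦ ⟨r⁻¹ • x, ⟨hX hxX (inv_pos.2 hr), ?_⟩,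
    smul_inv_smul₀ hr.ne' x⟩
  rw [h₁ x (inv_nonneg.2 hr.le), inv_pow, hrc]
  exact inv_mul_le_one_of_le₀ hxF hc.le

theorem tendsto_card_lt_div [IsZLattice ℝ L] (hX : ∀ ⦃x⦄ ⦃r : ℝ⦄, x ∈ X → 0 < r → r • x ∈ X)
    (h₁ : ∀ x ⦃r : ℝ⦄, 0 ≤ r → F (r • x) = r ^ Fintype.card ι * F x)
    (h₂ : IsBounded {x ∈ X | F x ≤ 1}) (h₃ : MeasurableSet {x ∈ X | F x ≤ 1})
    (h₄ : volume (frontier {x | x ∈ X ∧ F x ≤ 1}) = 0) :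
    Tendsto (fun c : ℝ ↦ Nat.card ({x ∈ X | F x < c} ∩ L : Set (ι → ℝ)) / c)
      atTop (𝓝 (volume.real {x ∈ X | F x ≤ 1} / ZLattice.covolume L)) := by
  set N : ℝ → ℝ := fun c ↦ Nat.card ({x ∈ X | F x ≤ c} ∩ L : Set (ι → ℝ))
  have hle : Tendsto (fun c ↦ N c / c) atTop _ :=
    ZLattice.covolume.tendsto_card_le_div L hX h₁ h₂ h₃ h₄
  have hratio : Tendsto (fun c : ℝ ↦ (c - 1) / c) atTop (𝓝 1) := by
    simpa using tendsto_const_nhds (x := (1 : ℝ)).sub tendsto_inv_atTop_zero |>.congr'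
      (by filter_upwards [eventually_ne_atTop 0] with c hc; field_simp)
  have hshift : Tendsto (fun c ↦ N (c - 1) / c) atTop
      (𝓝 (volume.real {x ∈ X | F x ≤ 1} / ZLattice.covolume L)) := by
    have := (hle.comp (tendsto_atTop_add_const_right _ (-1) tendsto_id)).mul hratio
    rw [mul_one] at this
    refine this.congr' ?_
    filter_upwards [eventually_gt_atTop 1] with c hc
    have : c - 1 ≠ 0 := by linarith
    simp only [Function.comp_apply, id, ← sub_eq_add_neg]
    field_simp
  have hfin : ∀ c, 0 < c → ({x ∈ X | F x ≤ c} ∩ L : Set (ι → ℝ)).Finite := fun c hc ↦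
    finite_inter_of_isBounded L (isBounded_sublevel hX h₁ h₂ hc)
  refine tendsto_of_tendsto_of_tendsto_of_le_of_le' hshift hle ?_ ?_ <;>
    filter_upwards [eventually_gt_atTop 1] with c hc <;>
    refine div_le_div_of_nonneg_right (Nat.cast_le.2 (Nat.card_mono ?_ ?_)) (by linarith)
  · exact (hfin c (by linarith)).subset (inter_subset_inter_left _ fun x hx ↦ ⟨hx.1, hx.2.le⟩)
  · exact inter_subset_inter_left _ fun x hx ↦ ⟨hx.1, by linarith [hx.2]⟩
  · exact hfin c (by linarith)
  · exact inter_subset_inter_left _ fun x hx ↦ ⟨hx.1, hx.2.le⟩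

end LatticeCount

/-- The condition `0 < x 0` of the paper's sector is implied whenever `0 < tan θ`. -/
def sectorCone (θ : ℝ) : Set (Fin 2 → ℝ) := {x | 0 < x 1 ∧ x 1 ≤ x 0 * tan θ}

def sqNorm (x : Fin 2 → ℝ) : ℝ := x 0 ^ 2 + x 1 ^ 2

theorem continuous_sqNorm : Continuous sqNorm := by
  unfold sqNorm; fun_prop

theorem smul_mem_sectorCone {θ r : ℝ} {x : Fin 2 → ℝ} (hx : x ∈ sectorCone θ) (hr : 0 < r) :
    r • x ∈ sectorCone θ := by
  obtain ⟨h₁, h₂⟩ := hx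
  refine ⟨by simpa using mul_pos hr h₁, ?_⟩
  simpa [mul_assoc] using mul_le_mul_of_nonneg_left h₂ hr.le

theorem sqNorm_smul (x : Fin 2 → ℝ) (r : ℝ) :
    sqNorm (r • x) = r ^ Fintype.card (Fin 2) * sqNorm x := by
  simp only [sqNorm, Pi.smul_apply, smul_eq_mul, Fintype.card_fin]
  ring

theorem isBounded_setOf_sqNorm_le (c : ℝ) : IsBounded {x | sqNorm x ≤ c} := by
  refine (Metric.isBounded_closedBall (x := (0 : Fin 2 → ℝ)) (r := √c)).subset fun x hx ↦ ?_
  have h₀ := sq_nonneg (x 0)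
  have h₁ := sq_nonneg (x 1)
  rw [mem_closedBall_zero_iff, pi_norm_le_iff_of_nonneg (sqrt_nonneg c), Fin.forall_fin_two]
  simp only [sqNorm, mem_ofPred_eq] at hx
  constructor <;> rw [Real.norm_eq_abs, ← sqrt_sq_eq_abs] <;> exact sqrt_le_sqrt (by linarith)

theorem measurableSet_unitSector (θ : ℝ) :
    MeasurableSet {x ∈ sectorCone θ | sqNorm x ≤ 1} :=
  ((measurableSet_lt measurable_const (measurable_pi_apply 1)).inter
    (measurableSet_le (measurable_pi_apply 1) ((measurable_pi_apply 0).mul_const _))).inter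
    (measurableSet_le continuous_sqNorm.measurable measurable_const)

theorem volume_setOf_apply_one_eq_mul (t : ℝ) : volume {x : Fin 2 → ℝ | x 1 = x 0 * t} = 0 := by
  let φ : (Fin 2 → ℝ) →ₗ[ℝ] ℝ := LinearMap.proj 1 - t • LinearMap.proj 0
  have hφ : LinearMap.ker φ ≠ ⊤ := fun h ↦ by
    simpa [φ] using LinearMap.congr_fun (LinearMap.ker_eq_top.1 h) (Pi.single 1 1)
  convert Measure.addHaar_submodule volume _ hφ using 2
  ext x
  simp [φ, sub_eq_zero, mul_comm]

theorem volume_setOf_sqNorm_eq : volume {x | sqNorm x = 1} = 0 := by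
  rw [← Complex.volume_preserving_equiv_pi.measure_preimage
    (measurableSet_eq_fun continuous_sqNorm.measurable measurable_const).nullMeasurableSet]
  convert Measure.addHaar_sphere volume (0 : ℂ) 1 using 2
  ext z
  rw [mem_sphere_zero_iff_norm, Complex.norm_def, Real.sqrt_eq_one, Complex.normSq_apply]
  simp [sqNorm, sq]

theorem volume_frontier_unitSector (θ : ℝ) :
    volume (frontier {x | x ∈ sectorCone θ ∧ sqNorm x ≤ 1}) = 0 := by
  have hsub : ∀ s t : Set (Fin 2 → ℝ), frontier (s ∩ t) ⊆ frontier s ∪ frontier t :=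
    fun s t ↦ (frontier_inter_subset s t).trans
      (union_subset_union inter_subset_left inter_subset_right)
  refine measure_mono_null ((hsub _ _).trans (union_subset_union (hsub _ _) subset_rfl)) ?_
  refine measure_union_null (measure_union_null ?_ ?_) ?_
  · refine measure_mono_null ((frontier_lt_subset_eq continuous_const (continuous_apply 1)).trans
      fun x hx ↦ ?_) (volume_setOf_apply_one_eq_mul 0)
    show x 1 = x 0 * 0
    rw [mul_zero, ← hx]
  · exact measure_mono_null (frontier_le_subset_eq (continuous_apply 1)
      ((continuous_apply 0).mul continuous_const)) (volume_setOf_apply_one_eq_mul _)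
  · exact measure_mono_null (frontier_le_subset_eq continuous_sqNorm continuous_const)
      volume_setOf_sqNorm_eq

theorem sin_nonpos_iff {t : ℝ} (h₁ : -π ≤ t) (h₂ : t < π) : sin t ≤ 0 ↔ t ≤ 0 :=
  ⟨fun h ↦ not_lt.1 fun ht ↦ (sin_pos_of_pos_of_lt_pi ht h₂).not_ge h,
    fun h ↦ sin_nonpos_of_nonpos_of_neg_pi_le h h₁⟩

theorem polar_mem_sectorCone_iff {θ r φ : ℝ} (hθ : 0 < θ) (hθ' : θ < π / 2) (hr : 0 < r)
    (hφ : φ ∈ Ioo (-π) π) :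
    (0 < r * sin φ ∧ r * sin φ ≤ r * cos φ * tan θ) ↔ φ ∈ Ioc 0 θ := by
  have hcosθ : 0 < cos θ := cos_pos_of_mem_Ioo ⟨by linarith, hθ'⟩
  have hsin : 0 < r * sin φ ↔ 0 < φ := by
    rw [mul_pos_iff_of_pos_left hr, ← not_le, ← not_le, sin_nonpos_iff hφ.1.le hφ.2]
  rw [hsin]
  refine and_congr_right fun hφ₀ ↦ ?_
  rw [← sub_nonpos, tan_eq_sin_div_cos, ← mul_le_mul_iff_of_pos_left (div_pos hcosθ hr),
    mul_zero, show cos θ / r * (r * sin φ - r * cos φ * (sin θ / cos θ)) = sin (φ - θ) by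
      rw [sin_sub]; field_simp,
    sin_nonpos_iff (by linarith) (by linarith [hφ.2]), sub_nonpos]

def planeSector (θ : ℝ) : Set (ℝ × ℝ) :=
  {p | (0 < p.2 ∧ p.2 ≤ p.1 * tan θ) ∧ p.1 ^ 2 + p.2 ^ 2 ≤ 1}

theorem measurableSet_planeSector (θ : ℝ) : MeasurableSet (planeSector θ) :=
  ((measurableSet_lt measurable_const measurable_snd).inter
    (measurableSet_le measurable_snd (measurable_fst.mul_const _))).inter
    (measurableSet_le (by fun_prop : Measurable fun p : ℝ × ℝ ↦ p.1 ^ 2 + p.2 ^ 2)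
      measurable_const)

theorem polarCoord_symm_mem_planeSector_iff {θ : ℝ} (hθ : 0 < θ) (hθ' : θ < π / 2) {p : ℝ × ℝ}
    (hp : p ∈ polarCoord.target) :
    polarCoord.symm p ∈ planeSector θ ↔ p ∈ Ioc (0 : ℝ) 1 ×ˢ Ioc 0 θ := by
  obtain ⟨r, φ⟩ := p
  obtain ⟨hr, hφ⟩ := hp
  have hr : 0 < r := hr
  have hnorm : (r * cos φ) ^ 2 + (r * sin φ) ^ 2 = r ^ 2 := by
    linear_combination r ^ 2 * sin_sq_add_cos_sq φ
  simp only [planeSector, polarCoord_symm_apply, mem_ofPred_eq, hnorm,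
    polar_mem_sectorCone_iff hθ hθ' hr hφ, mem_prod, mem_Ioc, hr, true_and,
    sq_le_one_iff₀ hr.le]
  tauto

theorem volume_real_planeSector {θ : ℝ} (hθ : 0 < θ) (hθ' : θ < π / 2) :
    volume.real (planeSector θ) = θ / 2 := by
  set B := Ioc (0 : ℝ) 1 ×ˢ Ioc 0 θ
  have hB : B ⊆ polarCoord.target := fun p ⟨hr, hφ⟩ ↦
    ⟨hr.1, by linarith [hφ.1], by linarith [hφ.2]⟩
  have hpolar : ∀ p ∈ polarCoord.target,
      p.1 • (planeSector θ).indicator 1 (polarCoord.symm p) = B.indicator Prod.fst p := by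
    intro p hp
    by_cases h : p ∈ B
    · rw [indicator_of_mem h,
        indicator_of_mem ((polarCoord_symm_mem_planeSector_iff hθ hθ' hp).2 h), Pi.one_apply,
        smul_eq_mul, mul_one]
    · rw [indicator_of_notMem h,
        indicator_of_notMem (mt (polarCoord_symm_mem_planeSector_iff hθ hθ' hp).1 h), smul_zero]
  have hradial : ∫ r in Ioc (0 : ℝ) 1, r = 1 / 2 := by
    rw [← intervalIntegral.integral_of_le zero_le_one, integral_id]
    norm_num
  calc volume.real (planeSector θ)
      = ∫ p in polarCoord.target, p.1 • (planeSector θ).indicator 1 (polarCoord.symm p) := by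
        rw [integral_comp_polarCoord_symm, integral_indicator_one (measurableSet_planeSector θ)]
    _ = ∫ p in B, p.1 := by
        rw [setIntegral_congr_fun polarCoord.open_target.measurableSet hpolar,
          setIntegral_indicator (measurableSet_Ioc.prod measurableSet_Ioc),
          inter_eq_self_of_subset_right hB]
    _ = (∫ r in Ioc (0 : ℝ) 1, r) * ∫ _ in Ioc (0 : ℝ) θ, (1 : ℝ) := by
        simpa [Measure.volume_eq_prod] using setIntegral_prod_mul (μ := volume) (ν := volume)
          (fun r : ℝ ↦ r) (fun _ : ℝ ↦ (1 : ℝ)) (Ioc 0 1) (Ioc 0 θ)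
    _ = θ / 2 := by
        rw [hradial, setIntegral_const, measureReal_def, Real.volume_Ioc,
          ENNReal.toReal_ofReal (by linarith)]
        ring

theorem volume_real_unitSector {θ : ℝ} (hθ : 0 < θ) (hθ' : θ < π / 2) :
    volume.real {x ∈ sectorCone θ | sqNorm x ≤ 1} = θ / 2 := by
  rw [← volume_real_planeSector hθ hθ', measureReal_def, measureReal_def,
    ← (volume_preserving_finTwoArrow ℝ).measure_preimage
      (measurableSet_planeSector θ).nullMeasurableSet]
  rfl

abbrev intLattice : Submodule ℤ (Fin 2 → ℝ) := span ℤ (range (Pi.basisFun ℝ (Fin 2)))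

noncomputable def checkerboardBasis : Basis (Fin 2) ℝ (Fin 2 → ℝ) :=
  basisOfLinearIndependentOfCardEqFinrank (b := (![![1, 1], ![1, -1]] : Fin 2 → Fin 2 → ℝ))
    (LinearIndependent.pair_iff.2 fun s t h ↦ by
      have h₀ := congrFun h 0
      have h₁ := congrFun h 1
      simp only [Matrix.smul_cons, smul_eq_mul, mul_one, Matrix.smul_empty, mul_neg, Pi.add_apply,
        Matrix.cons_val_zero, Pi.zero_apply, Matrix.cons_val_one, Matrix.cons_val_fin_one] at h₀ h₁
      constructor <;> linarith)
    (by simp)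

abbrev checkerboard : Submodule ℤ (Fin 2 → ℝ) := span ℤ (range checkerboardBasis)

theorem covolume_span_basis {ι : Type*} [Fintype ι] [DecidableEq ι] (b : Basis ι ℝ (ι → ℝ)) :
    ZLattice.covolume (span ℤ (range b)) = |(Matrix.of b).det| := by
  rw [ZLattice.covolume_eq_measure_fundamentalDomain _ _ (ZSpan.isAddFundamentalDomain b volume),
    ZSpan.volume_real_fundamentalDomain]

theorem covolume_intLattice : ZLattice.covolume intLattice = 1 := by
  rw [covolume_span_basis, Matrix.det_fin_two]
  simp [Pi.basisFun_apply]

theorem covolume_checkerboard : ZLattice.covolume checkerboard = 2 := by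
  rw [covolume_span_basis, checkerboardBasis, coe_basisOfLinearIndependentOfCardEqFinrank,
    Matrix.det_fin_two]
  norm_num

theorem mem_intLattice {x : Fin 2 → ℝ} : x ∈ intLattice ↔ ∃ a b : ℤ, ![(a : ℝ), b] = x := by
  simp only [mem_span_range_iff_exists_fun, Fin.sum_univ_two]
  constructor
  · rintro ⟨c, rfl⟩
    exact ⟨c 0, c 1, by ext i; fin_cases i <;> simp⟩
  · rintro ⟨a, b, rfl⟩
    exact ⟨![a, b], by ext i; fin_cases i <;> simp⟩

theorem vec_mem_checkerboard (a b : ℤ) : ![(a : ℝ), b] ∈ checkerboard ↔ Even (a + b) := by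
  simp only [checkerboardBasis, coe_basisOfLinearIndependentOfCardEqFinrank,
    mem_span_range_iff_exists_fun, Fin.sum_univ_two, funext_iff, Fin.forall_fin_two]
  simp only [Matrix.cons_val_zero, Matrix.smul_cons, zsmul_eq_mul, mul_one, Matrix.smul_empty,
    Matrix.cons_val_one, Matrix.cons_val_fin_one, smul_neg, Pi.add_apply]
  constructor
  · rintro ⟨c, h₀, h₁⟩
    exact ⟨c 0, by rw [← Int.cast_inj (α := ℝ)]; push_cast; linarith⟩
  · rintro ⟨k, hk⟩
    have hk : (a : ℝ) + b = k + k := by exact_mod_cast hk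
    exact ⟨![k, a - k], by simp, by
      simp only [Matrix.cons_val_zero, Matrix.cons_val_one, Matrix.cons_val_fin_one, Int.cast_sub,
        neg_sub]
      linarith⟩

theorem checkerboard_le_intLattice : checkerboard ≤ intLattice :=
  span_le.2 <| range_subset_iff.2 fun i ↦ mem_intLattice.2 <| by
    fin_cases i
    exacts [⟨1, 1, by simp [checkerboardBasis]⟩, ⟨1, -1, by simp [checkerboardBasis]⟩]

def oppositeParityPoints (θ c : ℝ) : Set (ℕ × ℕ) :=
  {p | 0 < p.1 ∧ 0 < p.2 ∧ p.1 % 2 ≠ p.2 % 2 ∧ (p.1 : ℝ) ^ 2 + (p.2 : ℝ) ^ 2 < c ∧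
    (p.2 : ℝ) ≤ (p.1 : ℝ) * tan θ}

theorem image_oppositeParityPoints {θ : ℝ} (hθ : 0 < θ) (hθ' : θ < π / 2) (c : ℝ) :
    (fun p : ℕ × ℕ ↦ ![(p.1 : ℝ), p.2]) '' oppositeParityPoints θ c =
      ({x ∈ sectorCone θ | sqNorm x < c} ∩ intLattice) \ checkerboard := by
  ext y
  constructor
  · rintro ⟨⟨a, b⟩, ⟨ha, hb, hpar, hc, hle⟩, rfl⟩
    have hD := vec_mem_checkerboard a b
    push_cast at hD
    refine ⟨⟨⟨⟨by simpa using hb, by simpa using hle⟩, by simpa [sqNorm] using hc⟩,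
      mem_intLattice.2 ⟨a, b, by simp⟩⟩, fun h ↦ ?_⟩
    obtain ⟨k, hk⟩ := hD.1 h
    omega
  · rintro ⟨⟨⟨⟨hb, hle⟩, hc⟩, hZ⟩, hD⟩
    obtain ⟨a, b, rfl⟩ := mem_intLattice.1 hZ
    rw [SetLike.mem_coe, vec_mem_checkerboard] at hD
    simp only [Fin.isValue, Matrix.cons_val_one, Matrix.cons_val_zero] at hb hle
    have ha : (0 : ℝ) < a :=
      pos_of_mul_pos_left (hb.trans_le hle) (tan_pos_of_pos_of_lt_pi_div_two hθ hθ').le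
    lift a to ℕ using (by exact_mod_cast ha.le)
    lift b to ℕ using (by exact_mod_cast hb.le)
    refine ⟨(a, b), ⟨by exact_mod_cast ha, by exact_mod_cast hb, fun hpar ↦ hD ?_,
      by simpa [sqNorm] using hc, by simpa using hle⟩, by simp⟩
    exact ⟨a / 2 + b / 2 + a % 2, by omega⟩

theorem ncard_oppositeParityPoints {θ : ℝ} (hθ : 0 < θ) (hθ' : θ < π / 2) (c : ℝ) :
    ((oppositeParityPoints θ c).ncard : ℝ) =
      Nat.card ({x ∈ sectorCone θ | sqNorm x < c} ∩ intLattice : Set (Fin 2 → ℝ)) -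
        Nat.card ({x ∈ sectorCone θ | sqNorm x < c} ∩ checkerboard : Set (Fin 2 → ℝ)) := by
  set R := {x ∈ sectorCone θ | sqNorm x < c}
  have hinj : Function.Injective fun p : ℕ × ℕ ↦ ![(p.1 : ℝ), p.2] := fun p q h ↦ by
    have h₀ := congrFun h 0
    have h₁ := congrFun h 1
    simp only [Matrix.cons_val_zero, Matrix.cons_val_one, Nat.cast_inj] at h₀ h₁
    exact Prod.ext h₀ h₁
  have hdiff : (R ∩ intLattice) \ checkerboard = (R ∩ intLattice) \ (R ∩ checkerboard) := by
    ext x; simp only [Set.mem_sdiff, mem_inter_iff]; tauto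
  have hsub : R ∩ checkerboard ⊆ R ∩ intLattice :=
    inter_subset_inter_right R checkerboard_le_intLattice
  have hfin : (R ∩ intLattice).Finite := finite_inter_of_isBounded intLattice
    ((isBounded_setOf_sqNorm_le c).subset fun x hx ↦ hx.2.le)
  rw [← ncard_image_of_injective _ hinj, image_oppositeParityPoints hθ hθ', hdiff,
    Nat.card_coe_set_eq, Nat.card_coe_set_eq, eq_sub_iff_add_eq]
  exact_mod_cast ncard_sdiff_add_ncard_of_subset hsub hfin

end OppositeParityCount

open OppositeParityCount

/-- Fix `0 < θ ≤ π/4` and let `F_θ(x)` be the number of pairs `(a, b)` of positive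
integers of opposite parity with `a² + b² < x²` and `b ≤ a·tan θ`. Then
`F_θ(x) ∼ θ·x²/4` as `x → ∞`. -/
theorem statement12 (θ : ℝ) (hθ : 0 < θ) (hθ' : θ ≤ π / 4) :
    Tendsto (fun x : ℝ =>
        (({p : ℕ × ℕ | 0 < p.1 ∧ 0 < p.2 ∧ p.1 % 2 ≠ p.2 % 2 ∧
            (p.1 : ℝ) ^ 2 + (p.2 : ℝ) ^ 2 < x ^ 2 ∧
            (p.2 : ℝ) ≤ (p.1 : ℝ) * Real.tan θ}.ncard : ℝ)) / (θ * x ^ 2 / 4))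
      atTop (nhds 1) := by
  have hθ₂ : θ < π / 2 := hθ'.trans_lt (by linarith [pi_pos])
  have hcount : ∀ (L : Submodule ℤ (Fin 2 → ℝ)) [DiscreteTopology L] [IsZLattice ℝ L],
      Tendsto (fun c : ℝ ↦ Nat.card ({x ∈ sectorCone θ | sqNorm x < c} ∩ L : Set (Fin 2 → ℝ)) / c)
        atTop (𝓝 (θ / 2 / ZLattice.covolume L)) := fun L _ _ ↦ by
    simpa only [volume_real_unitSector hθ hθ₂] using tendsto_card_lt_div L
      (fun _ _ hx hr ↦ smul_mem_sectorCone hx hr) (fun x r _ ↦ sqNorm_smul x r)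
      ((isBounded_setOf_sqNorm_le 1).subset fun _ hx ↦ hx.2) (measurableSet_unitSector θ)
      (volume_frontier_unitSector θ)
  have hdiff := (((hcount intLattice).sub (hcount checkerboard)).comp
    (tendsto_pow_atTop two_ne_zero)).const_mul (4 / θ)
  rw [covolume_intLattice, covolume_checkerboard,
    show 4 / θ * (θ / 2 / 1 - θ / 2 / 2) = 1 by field_simp; ring] at hdiff
  refine hdiff.congr' ?_
  filter_upwards [eventually_ne_atTop 0] with x hx
  change _ = ((oppositeParityPoints θ (x ^ 2)).ncard : ℝ) / _
  rw [ncard_oppositeParityPoints hθ hθ₂]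
  simp only [Function.comp_apply]
  field_simp
end
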